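/- For D ∈ ℕ and R > 0, R^{2D} e^{−2R²}/D! · Σ_{n=0}^{D−1} [I_n(2R²) + I_{n+1}(2R²)] divided by R^{2D}/D! tends to 0 as R → ∞; more precisely, e^{−2R²} Σ_{n=0}^{D−1}[I_n(2R²) + I_{n+1}(2R²)] → 0, where I_ν is the modified Bessel function of the first kind. -/

import Mathlib

open Filter Finset

/-- The modified Bessel function of the first kind of integer order,
`I_ν(x) = Σ_{k=0}^∞ (x/2)^{ν+2k}/(k! (ν+k)!)`. -/
noncomputable def besselI (ν : ℕ) (x : ℝ) : ℝ :=
  ∑' k : ℕ, (x / 2) ^ (ν + 2 * k) / ((Nat.factorial k : ℝ) * (Nat.factorial (ν + k) : ℝ))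

lemma centralBinom_sqrt_le (n : ℕ) :
    (Nat.centralBinom n : ℝ) * Real.sqrt (n + 1) ≤ 4 ^ n := by
  induction n with
  | zero => simp [Nat.centralBinom]
  | succ n ih =>
    have key : ((n : ℝ) + 1) * (Nat.centralBinom (n + 1) : ℝ)
        = 2 * (2 * n + 1) * (Nat.centralBinom n : ℝ) := by
      exact_mod_cast Nat.succ_mul_centralBinom_succ n
    have hn1 : (0 : ℝ) < (n : ℝ) + 1 := by positivity
    have hcb : (0 : ℝ) ≤ (Nat.centralBinom n : ℝ) := Nat.cast_nonneg _
    -- key sqrt inequality: 2(2n+1)√(n+2) ≤ 4(n+1)√(n+1)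
    have hsq : 2 * (2 * (n : ℝ) + 1) * Real.sqrt ((n : ℝ) + 1 + 1)
        ≤ 4 * ((n : ℝ) + 1) * Real.sqrt ((n : ℝ) + 1) := by
      have h1 : (0 : ℝ) ≤ 2 * (2 * (n : ℝ) + 1) := by positivity
      have h2 : (0 : ℝ) ≤ 4 * ((n : ℝ) + 1) := by positivity
      have e1 : 2 * (2 * (n : ℝ) + 1) * Real.sqrt ((n : ℝ) + 1 + 1)
          = Real.sqrt ((2 * (2 * (n : ℝ) + 1)) ^ 2 * ((n : ℝ) + 1 + 1)) := by
        rw [Real.sqrt_mul (by positivity), Real.sqrt_sq h1]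
      have e2 : 4 * ((n : ℝ) + 1) * Real.sqrt ((n : ℝ) + 1)
          = Real.sqrt ((4 * ((n : ℝ) + 1)) ^ 2 * ((n : ℝ) + 1)) := by
        rw [Real.sqrt_mul (by positivity), Real.sqrt_sq h2]
      rw [e1, e2]
      apply Real.sqrt_le_sqrt
      nlinarith [sq_nonneg ((n : ℝ))]
    -- multiply through by (n+1)
    have : ((n : ℝ) + 1) * ((Nat.centralBinom (n + 1) : ℝ) * Real.sqrt ((n : ℝ) + 1 + 1))
        ≤ ((n : ℝ) + 1) * 4 ^ (n + 1) := by
      calc ((n : ℝ) + 1) * ((Nat.centralBinom (n + 1) : ℝ) * Real.sqrt ((n : ℝ) + 1 + 1))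
          = (Nat.centralBinom n : ℝ) * (2 * (2 * n + 1) * Real.sqrt ((n : ℝ) + 1 + 1)) := by
            rw [← mul_assoc, key]; ring
        _ ≤ (Nat.centralBinom n : ℝ) * (4 * ((n : ℝ) + 1) * Real.sqrt ((n : ℝ) + 1)) :=
            mul_le_mul_of_nonneg_left hsq hcb
        _ = 4 * ((n : ℝ) + 1) * ((Nat.centralBinom n : ℝ) * Real.sqrt ((n : ℝ) + 1)) := by ring
        _ ≤ 4 * ((n : ℝ) + 1) * 4 ^ n :=
            mul_le_mul_of_nonneg_left ih (by positivity)
        _ = ((n : ℝ) + 1) * 4 ^ (n + 1) := by ring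
    have h2 := le_of_mul_le_mul_left this hn1
    push_cast
    convert h2 using 3

lemma choose_sqrt_le (m k : ℕ) (hk : 2 * k ≤ m) :
    (m.choose k : ℝ) * Real.sqrt (k + 1) ≤ 2 ^ m := by
  have hmid : (m.choose k : ℝ) ≤ (m.choose (m / 2) : ℝ) := by
    exact_mod_cast Nat.choose_le_middle k m
  have hk' : (k : ℝ) + 1 ≤ (m / 2 : ℕ) + 1 := by
    have : k ≤ m / 2 := Nat.le_div_iff_mul_le (by norm_num) |>.2 (by omega)
    exact_mod_cast Nat.succ_le_succ this
  have hsqrtk : Real.sqrt ((k : ℝ) + 1) ≤ Real.sqrt ((m / 2 : ℕ) + 1) :=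
    Real.sqrt_le_sqrt hk'
  have h1 : (m.choose k : ℝ) * Real.sqrt (k + 1)
      ≤ (m.choose (m / 2) : ℝ) * Real.sqrt ((m / 2 : ℕ) + 1) :=
    mul_le_mul hmid hsqrtk (Real.sqrt_nonneg _) (Nat.cast_nonneg _)
  refine h1.trans ?_
  rcases Nat.even_or_odd m with ⟨n, hn⟩ | ⟨n, hn⟩
  · subst hn
    have hdiv : (n + n) / 2 = n := by omega
    rw [hdiv]
    have : (Nat.choose (n + n) n : ℝ) = (Nat.centralBinom n : ℝ) := by
      rw [Nat.centralBinom_eq_two_mul_choose]; norm_num [two_mul]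
    rw [this]
    calc (Nat.centralBinom n : ℝ) * Real.sqrt ((n : ℝ) + 1) ≤ 4 ^ n := centralBinom_sqrt_le n
      _ = 2 ^ (n + n) := by rw [show (4 : ℝ) = 2 ^ 2 by norm_num, ← pow_mul]; ring_nf
  · subst hn
    have hdiv : (2 * n + 1) / 2 = n := by omega
    rw [hdiv]
    have hch : 2 * Nat.choose (2 * n + 1) n = Nat.centralBinom (n + 1) := by
      rw [Nat.centralBinom_eq_two_mul_choose]
      have : 2 * (n + 1) = (2 * n + 1) + 1 := by ring
      rw [this, Nat.choose_succ_succ' (2 * n + 1) n]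
      rw [Nat.choose_symm_half n]
      ring
    have hch' : (Nat.choose (2 * n + 1) n : ℝ) = (Nat.centralBinom (n + 1) : ℝ) / 2 := by
      have := congrArg (Nat.cast : ℕ → ℝ) hch
      push_cast at this
      linarith
    rw [hch']
    have hb := centralBinom_sqrt_le (n + 1)
    have hmono : Real.sqrt ((n : ℝ) + 1) ≤ Real.sqrt (((n : ℝ) + 1) + 1) :=
      Real.sqrt_le_sqrt (by linarith)
    have : (Nat.centralBinom (n + 1) : ℝ) / 2 * Real.sqrt ((n : ℝ) + 1)
        ≤ (Nat.centralBinom (n + 1) : ℝ) / 2 * Real.sqrt (((n : ℝ) + 1) + 1) :=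
      mul_le_mul_of_nonneg_left hmono (by positivity)
    refine this.trans ?_
    have : (Nat.centralBinom (n + 1) : ℝ) * Real.sqrt (((n : ℝ) + 1) + 1) ≤ 4 ^ (n + 1) := by
      have := centralBinom_sqrt_le (n + 1)
      push_cast at this ⊢
      convert this using 3 <;> ring
    calc (Nat.centralBinom (n + 1) : ℝ) / 2 * Real.sqrt (((n : ℝ) + 1) + 1)
        ≤ 4 ^ (n + 1) / 2 := by linarith
      _ = 2 ^ (2 * n + 1) := by
          rw [show (4 : ℝ) = 2 ^ 2 by norm_num, ← pow_mul]
          rw [show 2 * (n + 1) = (2 * n + 1) + 1 by ring, pow_succ]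
          ring

/-- The k-th term of the Bessel series is bounded by `x^m/(m! √(k+1))` with `m = ν+2k`. -/
lemma bessel_term_le (ν k : ℕ) {x : ℝ} (hx : 0 ≤ x) :
    (x / 2) ^ (ν + 2 * k) / ((Nat.factorial k : ℝ) * (Nat.factorial (ν + k) : ℝ))
      ≤ x ^ (ν + 2 * k) / (Nat.factorial (ν + 2 * k) : ℝ) / Real.sqrt (k + 1) := by
  set m := ν + 2 * k with hm
  have hkm : k ≤ m := by omega
  have hfact : (m.choose k : ℝ) * (Nat.factorial k : ℝ) * (Nat.factorial (ν + k) : ℝ)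
      = (Nat.factorial m : ℝ) := by
    have := Nat.choose_mul_factorial_mul_factorial hkm
    have hmk : m - k = ν + k := by omega
    rw [hmk] at this
    exact_mod_cast this
  have hchoose : (m.choose k : ℝ) * Real.sqrt (k + 1) ≤ 2 ^ m :=
    choose_sqrt_le m k (by omega)
  have hfk : (0 : ℝ) < (Nat.factorial k : ℝ) := by exact_mod_cast Nat.factorial_pos k
  have hfnk : (0 : ℝ) < (Nat.factorial (ν + k) : ℝ) := by exact_mod_cast Nat.factorial_pos (ν + k)
  have hfm : (0 : ℝ) < (Nat.factorial m : ℝ) := by exact_mod_cast Nat.factorial_pos m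
  have hs : (0 : ℝ) < Real.sqrt (k + 1) := Real.sqrt_pos.2 (by positivity)
  have hxm : (0 : ℝ) ≤ x ^ m := pow_nonneg hx m
  have hL : (x / 2) ^ m / ((Nat.factorial k : ℝ) * (Nat.factorial (ν + k) : ℝ))
      = x ^ m * (m.choose k : ℝ) / ((Nat.factorial m : ℝ) * 2 ^ m) := by
    rw [div_pow, div_div, div_eq_div_iff (by positivity) (by positivity), ← hfact]
    ring
  rw [hL, div_div, div_le_div_iff₀ (by positivity) (by positivity)]
  have h1 := mul_le_mul_of_nonneg_left hchoose (mul_nonneg hxm hfm.le)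
  nlinarith [h1]

lemma bessel_summable (ν : ℕ) {x : ℝ} (hx : 0 ≤ x) :
    Summable (fun k : ℕ =>
      (x / 2) ^ (ν + 2 * k) / ((Nat.factorial k : ℝ) * (Nat.factorial (ν + k) : ℝ))) := by
  have hg : Summable (fun k : ℕ => (x / 2) ^ ν * (((x / 2) ^ 2) ^ k / (Nat.factorial k : ℝ))) :=
    (Real.summable_pow_div_factorial ((x / 2) ^ 2)).mul_left _
  refine Summable.of_nonneg_of_le (fun k => by positivity) (fun k => ?_) hg
  rw [pow_add, pow_mul]
  have h1 : (1 : ℝ) ≤ (Nat.factorial (ν + k) : ℝ) := by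
    exact_mod_cast Nat.one_le_iff_ne_zero.2 (Nat.factorial_ne_zero _)
  have hfk : (0 : ℝ) < (Nat.factorial k : ℝ) := by exact_mod_cast Nat.factorial_pos k
  rw [mul_div_assoc]
  apply mul_le_mul_of_nonneg_left _ (by positivity)
  exact div_le_div_of_nonneg_left (by positivity) hfk
    (le_mul_of_one_le_right hfk.le h1)

lemma exp_tsum (x : ℝ) : Real.exp x = ∑' n : ℕ, x ^ n / (Nat.factorial n : ℝ) := by
  rw [Real.exp_eq_exp_ℝ, NormedSpace.exp_eq_tsum_div]

lemma bessel_key_bound (ν K : ℕ) {x : ℝ} (hx : 0 ≤ x) :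
    besselI ν x ≤ (∑ k ∈ Finset.range K, x ^ (ν + 2 * k) / (Nat.factorial (ν + 2 * k) : ℝ))
      + Real.exp x / Real.sqrt (K + 1) := by
  have hsum := bessel_summable ν hx
  rw [besselI, ← Summable.sum_add_tsum_nat_add K hsum]
  apply add_le_add
  · apply Finset.sum_le_sum
    intro k _
    have h := bessel_term_le ν k hx
    have hs1 : (1 : ℝ) ≤ Real.sqrt (k + 1) := by
      have h := Real.sqrt_le_sqrt
        (show (1 : ℝ) ≤ (k : ℝ) + 1 from le_add_of_nonneg_left (Nat.cast_nonneg k))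
      rwa [Real.sqrt_one] at h
    refine h.trans ?_
    exact div_le_self (by positivity) hs1
  · -- tail bound
    have hexp : Real.exp x / Real.sqrt (K + 1)
        = ∑' m : ℕ, x ^ m / (Nat.factorial m : ℝ) * (Real.sqrt (K + 1))⁻¹ := by
      rw [tsum_mul_right, ← exp_tsum, div_eq_mul_inv]
    rw [hexp]
    apply Summable.tsum_le_tsum_of_inj (fun i => ν + 2 * (i + K))
    · intro a b hab; simpa using hab
    · intro c _; positivity
    · intro i
      have h := bessel_term_le ν (i + K) hx
      refine h.trans ?_
      rw [div_eq_mul_inv (x ^ (ν + 2 * (i + K)) / _)]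
      apply mul_le_mul_of_nonneg_left _ (by positivity)
      apply inv_anti₀ (Real.sqrt_pos.2 (by positivity))
      exact Real.sqrt_le_sqrt (by push_cast; linarith)
    · exact (summable_nat_add_iff K).2 hsum
    · exact (Real.summable_pow_div_factorial x).mul_right _

lemma bessel_nonneg (ν : ℕ) {x : ℝ} (hx : 0 ≤ x) : 0 ≤ besselI ν x :=
  tsum_nonneg (fun k => by positivity)

lemma exp_mul_bessel_tendsto (ν : ℕ) :
    Tendsto (fun x : ℝ => Real.exp (-x) * besselI ν x) atTop (nhds 0) := by
  rw [Metric.tendsto_atTop]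
  intro ε hε
  -- choose K with 1/√(K+1) < ε/2
  obtain ⟨K, hK⟩ : ∃ K : ℕ, (Real.sqrt (K + 1))⁻¹ < ε / 2 := by
    obtain ⟨K, hK⟩ := exists_nat_gt ((2 / ε) ^ 2)
    refine ⟨K, ?_⟩
    have h2ε : (0 : ℝ) < 2 / ε := by positivity
    have hsq : 2 / ε < Real.sqrt (K + 1) := by
      have : (2 / ε) ^ 2 < (K : ℝ) + 1 := by linarith
      have := Real.sqrt_lt_sqrt (by positivity) this
      rwa [Real.sqrt_sq h2ε.le] at this
    have hinv : (Real.sqrt (K + 1))⁻¹ < (2 / ε)⁻¹ := inv_strictAnti₀ h2ε hsq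
    rw [show (2 / ε)⁻¹ = ε / 2 by rw [inv_div]] at hinv
    exact hinv
  -- the finite head tends to 0
  have hhead : Tendsto (fun x : ℝ => Real.exp (-x) *
      ∑ k ∈ Finset.range K, x ^ (ν + 2 * k) / (Nat.factorial (ν + 2 * k) : ℝ))
      atTop (nhds 0) := by
    have : Tendsto (fun x : ℝ =>
        ∑ k ∈ Finset.range K, Real.exp (-x) * (x ^ (ν + 2 * k) / (Nat.factorial (ν + 2 * k) : ℝ)))
        atTop (nhds 0) := by
      rw [show (0 : ℝ) = ∑ k ∈ Finset.range K, 0 by simp]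
      apply tendsto_finset_sum
      intro k _
      have h := (Real.tendsto_pow_mul_exp_neg_atTop_nhds_zero (ν + 2 * k)).div_const
        (Nat.factorial (ν + 2 * k) : ℝ)
      rw [zero_div] at h
      convert h using 2 with x
      ring
    convert this using 2 with x
    rw [Finset.mul_sum]
  rw [Metric.tendsto_atTop] at hhead
  obtain ⟨N, hN⟩ := hhead (ε / 2) (by positivity)
  refine ⟨max N 0, fun x hx => ?_⟩
  have hx0 : (0 : ℝ) ≤ x := le_trans (le_max_right N 0) hx
  have hxN : N ≤ x := le_trans (le_max_left N 0) hx
  have hf0 : 0 ≤ Real.exp (-x) * besselI ν x :=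
    mul_nonneg (Real.exp_pos _).le (bessel_nonneg ν hx0)
  rw [Real.dist_eq, sub_zero, abs_of_nonneg hf0]
  have hbd := bessel_key_bound ν K hx0
  have step : Real.exp (-x) * besselI ν x
      ≤ Real.exp (-x) * ∑ k ∈ Finset.range K, x ^ (ν + 2 * k) / (Nat.factorial (ν + 2 * k) : ℝ)
        + (Real.sqrt (K + 1))⁻¹ := by
    calc Real.exp (-x) * besselI ν x
        ≤ Real.exp (-x) * ((∑ k ∈ Finset.range K, x ^ (ν + 2 * k) / (Nat.factorial (ν + 2 * k) : ℝ))
            + Real.exp x / Real.sqrt (K + 1)) :=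
          mul_le_mul_of_nonneg_left hbd (Real.exp_pos _).le
      _ = Real.exp (-x) * ∑ k ∈ Finset.range K, x ^ (ν + 2 * k) / (Nat.factorial (ν + 2 * k) : ℝ)
            + Real.exp (-x) * Real.exp x / Real.sqrt (K + 1) := by ring
      _ = Real.exp (-x) * ∑ k ∈ Finset.range K, x ^ (ν + 2 * k) / (Nat.factorial (ν + 2 * k) : ℝ)
            + (Real.sqrt (K + 1))⁻¹ := by
          rw [← Real.exp_add, neg_add_cancel, Real.exp_zero, one_div]
  have hhead' := hN x hxN
  rw [Real.dist_eq, sub_zero] at hhead'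
  have : Real.exp (-x) * ∑ k ∈ Finset.range K, x ^ (ν + 2 * k) / (Nat.factorial (ν + 2 * k) : ℝ)
      < ε / 2 := lt_of_abs_lt hhead'
  linarith

theorem heisenberg_hyperuniform (D : ℕ) (hD : 1 ≤ D) :
    Tendsto
      (fun R : ℝ => Real.exp (-2 * R ^ 2) *
        ∑ n ∈ Finset.range D, (besselI n (2 * R ^ 2) + besselI (n + 1) (2 * R ^ 2)))
      atTop (nhds 0) := by
  have hsq : Tendsto (fun R : ℝ => 2 * R ^ 2) atTop atTop :=
    (tendsto_pow_atTop two_ne_zero).const_mul_atTop (by norm_num)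
  have key : ∀ ν : ℕ, Tendsto (fun R : ℝ => Real.exp (-(2 * R ^ 2)) * besselI ν (2 * R ^ 2))
      atTop (nhds 0) := fun ν => (exp_mul_bessel_tendsto ν).comp hsq
  have : Tendsto (fun R : ℝ => ∑ n ∈ Finset.range D,
      (Real.exp (-(2 * R ^ 2)) * besselI n (2 * R ^ 2)
        + Real.exp (-(2 * R ^ 2)) * besselI (n + 1) (2 * R ^ 2))) atTop (nhds 0) := by
    rw [show (0 : ℝ) = ∑ n ∈ Finset.range D, (0 + 0) by simp]
    exact tendsto_finset_sum _ (fun n _ => (key n).add (key (n + 1)))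
  convert this using 2 with R
  rw [Finset.mul_sum]
  congr 1 with n
  rw [neg_mul, mul_add]
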